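/- arXiv:1810.03692 — 5 statements merged into one kernel-verified Lean document; each statement's English description precedes it below -/
import Mathlib

section
/- For any T>0, α∈(-1,1) and h>0, ∫₀^T ∫_ℝ (1 - cos(ξh)) e^{-tξ²} |ξ|^α dξ dt ≤ C·h^{1-α}, where C = ∫_ℝ (1-cos η)|η|^{α-2} dη < ∞. -/
open MeasureTheory Real Set

/-!
Integrating the heat factor in time first gives `∫₀^T e^{-tξ²} dt ≤ ξ⁻²`, so by Tonelli the double
integral is at most `∫ (1 - cos (ξh)) |ξ|^{α-2} dξ`, and the substitution `η = ξh` turns this into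
`C h^{1-α}`. The constant `C` is finite because `1 - cos η ≤ η²/2` near `0` (where `|η|^α` is
integrable as `α > -1`) and `1 - cos η ≤ 2` near infinity (where `|η|^{α-2}` is integrable as `α < 1`).
-/

theorem integral_integral_le_of_lintegral_enorm_le {X Y : Type*} [MeasurableSpace X]
    [MeasurableSpace Y] {μ : Measure X} {ν : Measure Y} [SFinite μ] [SFinite ν] {F : X → Y → ℝ}
    (hF : AEMeasurable (Function.uncurry fun x y => ‖F x y‖ₑ) (μ.prod ν)) {g : Y → ℝ}
    (hg : Integrable g ν) (hg_nonneg : 0 ≤ᵐ[ν] g)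
    (hFg : ∀ᵐ y ∂ν, ∫⁻ x, ‖F x y‖ₑ ∂μ ≤ ENNReal.ofReal (g y)) :
    ∫ x, ∫ y, F x y ∂ν ∂μ ≤ ∫ y, g y ∂ν := by
  rw [← ENNReal.ofReal_le_ofReal_iff (integral_nonneg_of_ae hg_nonneg)]
  calc ENNReal.ofReal (∫ x, ∫ y, F x y ∂ν ∂μ)
      ≤ ‖∫ x, ∫ y, F x y ∂ν ∂μ‖ₑ := Real.ofReal_le_enorm _
    _ ≤ ∫⁻ x, ‖∫ y, F x y ∂ν‖ₑ ∂μ := enorm_integral_le_lintegral_enorm _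
    _ ≤ ∫⁻ x, ∫⁻ y, ‖F x y‖ₑ ∂ν ∂μ := lintegral_mono fun x => enorm_integral_le_lintegral_enorm _
    _ = ∫⁻ y, ∫⁻ x, ‖F x y‖ₑ ∂μ ∂ν := lintegral_lintegral_swap hF
    _ ≤ ∫⁻ y, ENNReal.ofReal (g y) ∂ν := lintegral_mono_ae hFg
    _ = ENNReal.ofReal (∫ y, g y ∂ν) := (ofReal_integral_eq_lintegral_ofReal hg hg_nonneg).symm

theorem Function.Even.integrable_of_integrableOn_Ioi {E : Type*} [NormedAddCommGroup E]
    {f : ℝ → E} (hf_even : f.Even) (hf : IntegrableOn f (Ioi 0)) : Integrable f := by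
  have hIio : IntegrableOn f (Iio 0) := by
    have hf' : IntegrableOn f (Ioi (-0)) := by rwa [neg_zero]
    exact hf'.comp_neg_Iio.congr_fun (fun x _ => hf_even x) measurableSet_Iio
  rw [← integrableOn_univ, ← Iio_union_Ici]
  exact hIio.union ((integrableOn_Ici_iff_integrableOn_Ioi enorm_ne_top).2 hf)

theorem lintegral_Ioi_enorm_exp_neg_mul {a : ℝ} (ha : 0 < a) :
    ∫⁻ t in Ioi 0, ‖exp (-t * a)‖ₑ = ‖a⁻¹‖ₑ := by
  have h_eq : (fun t => exp (-t * a)) = fun t => exp (-a * t) := by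
    funext t; ring_nf
  have h_int : IntegrableOn (fun t => exp (-t * a)) (Ioi 0) :=
    h_eq ▸ integrableOn_exp_mul_Ioi (neg_lt_zero.2 ha) 0
  have h_val : ∫ t in Ioi 0, exp (-t * a) = a⁻¹ := by
    rw [h_eq, integral_exp_mul_Ioi (neg_lt_zero.2 ha)]
    field_simp
    simp
  simp_rw [Real.enorm_of_nonneg (exp_pos _).le, Real.enorm_of_nonneg (inv_pos.2 ha).le, ← h_val]
  exact (ofReal_integral_eq_lintegral_ofReal h_int (ae_of_all _ fun t => (exp_pos _).le)).symm

theorem lintegral_Ioc_enorm_mul_exp_neg_mul_sq_le (c α T : ℝ) {ξ : ℝ} (hξ : ξ ≠ 0) :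
    ∫⁻ t in Ioc 0 T, ‖c * exp (-t * ξ ^ 2) * |ξ| ^ α‖ₑ ≤ ‖c * |ξ| ^ (α - 2)‖ₑ := by
  have h_pow : (ξ ^ 2)⁻¹ * |ξ| ^ α = |ξ| ^ (α - 2) := by
    rw [rpow_sub (abs_pos.2 hξ), rpow_two, sq_abs, div_eq_inv_mul]
  calc ∫⁻ t in Ioc 0 T, ‖c * exp (-t * ξ ^ 2) * |ξ| ^ α‖ₑ
      = ‖c‖ₑ * (∫⁻ t in Ioc 0 T, ‖exp (-t * ξ ^ 2)‖ₑ) * ‖|ξ| ^ α‖ₑ := by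
        simp_rw [enorm_mul]
        rw [lintegral_mul_const' _ _ enorm_ne_top, lintegral_const_mul' _ _ enorm_ne_top]
    _ ≤ ‖c‖ₑ * (∫⁻ t in Ioi 0, ‖exp (-t * ξ ^ 2)‖ₑ) * ‖|ξ| ^ α‖ₑ := by
        gcongr
        exact Ioc_subset_Ioi_self
    _ = ‖c * |ξ| ^ (α - 2)‖ₑ := by
        rw [lintegral_Ioi_enorm_exp_neg_mul (by positivity), ← h_pow, mul_assoc, ← enorm_mul,
          ← enorm_mul]

theorem one_sub_cos_nonneg (x : ℝ) : 0 ≤ 1 - cos x := sub_nonneg.2 (cos_le_one x)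

theorem integrableOn_Ioi_one_sub_cos_mul_abs_rpow {α : ℝ} (hα : α ∈ Ioo (-1 : ℝ) 1) :
    IntegrableOn (fun η : ℝ => (1 - cos η) * |η| ^ (α - 2)) (Ioi 0) := by
  have h_meas : AEStronglyMeasurable (fun η : ℝ => (1 - cos η) * |η| ^ (α - 2)) := by fun_prop
  have h_norm (x : ℝ) (hx : 0 < x) : ‖(1 - cos x) * |x| ^ (α - 2)‖ = (1 - cos x) * x ^ (α - 2) := by
    rw [abs_of_pos hx, norm_of_nonneg (mul_nonneg (one_sub_cos_nonneg x) (rpow_nonneg hx.le _))]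
  have h_near : IntegrableOn (fun η : ℝ => (1 - cos η) * |η| ^ (α - 2)) (Ioc 0 1) := by
    have h_dom : IntegrableOn (fun x : ℝ => x ^ α) (Ioc 0 1) := by
      rw [integrableOn_Ioc_iff_integrableOn_Ioo]
      exact (intervalIntegral.integrableOn_Ioo_rpow_iff zero_lt_one).2 hα.1
    refine h_dom.mono' h_meas.restrict ?_
    filter_upwards [ae_restrict_mem measurableSet_Ioc] with x ⟨hx₀, _⟩
    have h_cos : 1 - cos x ≤ x ^ (2 : ℝ) := by
      rw [rpow_two]; nlinarith [one_sub_sq_div_two_le_cos (x := x), sq_nonneg x]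
    calc ‖(1 - cos x) * |x| ^ (α - 2)‖ = (1 - cos x) * x ^ (α - 2) := h_norm x hx₀
      _ ≤ x ^ (2 : ℝ) * x ^ (α - 2) := by gcongr
      _ = x ^ α := by rw [← rpow_add hx₀]; ring_nf
  have h_far : IntegrableOn (fun η : ℝ => (1 - cos η) * |η| ^ (α - 2)) (Ioi 1) := by
    have h_dom : IntegrableOn (fun x : ℝ => 2 * x ^ (α - 2)) (Ioi 1) :=
      ((integrableOn_Ioi_rpow_iff zero_lt_one).2 (by linarith [hα.2])).const_mul 2
    refine h_dom.mono' h_meas.restrict ?_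
    filter_upwards [ae_restrict_mem measurableSet_Ioi] with x hx
    have hx₀ : 0 < x := zero_lt_one.trans hx
    rw [h_norm x hx₀]
    gcongr
    linarith [neg_one_le_cos x]
  simpa only [Ioc_union_Ioi_eq_Ioi zero_le_one] using h_near.union h_far

theorem integrable_one_sub_cos_mul_abs_rpow {α : ℝ} (hα : α ∈ Ioo (-1 : ℝ) 1) :
    Integrable (fun η : ℝ => (1 - cos η) * |η| ^ (α - 2)) :=
  Function.Even.integrable_of_integrableOn_Ioi (fun η => by simp only [cos_neg, abs_neg])
    (integrableOn_Ioi_one_sub_cos_mul_abs_rpow hα)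

theorem one_sub_cos_mul_mul_abs_rpow_eq (α : ℝ) {h : ℝ} (hh : 0 < h) (ξ : ℝ) :
    (1 - cos (ξ * h)) * |ξ| ^ (α - 2) = h ^ (2 - α) * ((1 - cos (ξ * h)) * |ξ * h| ^ (α - 2)) := by
  have h_pow : h ^ (2 - α) * h ^ (α - 2) = 1 := by rw [← rpow_add hh]; simp
  rw [abs_mul, abs_of_pos hh, mul_rpow (abs_nonneg ξ) hh.le]
  linear_combination (-(1 - cos (ξ * h)) * |ξ| ^ (α - 2)) * h_pow

theorem integral_one_sub_cos_mul_mul_abs_rpow (α : ℝ) {h : ℝ} (hh : 0 < h) :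
    ∫ ξ : ℝ, (1 - cos (ξ * h)) * |ξ| ^ (α - 2)
      = (∫ η : ℝ, (1 - cos η) * |η| ^ (α - 2)) * h ^ (1 - α) := by
  have h_pow : h ^ (2 - α) * h⁻¹ = h ^ (1 - α) := by
    rw [← rpow_neg_one, ← rpow_add hh]; ring_nf
  simp_rw [one_sub_cos_mul_mul_abs_rpow_eq α hh]
  rw [integral_const_mul, Measure.integral_comp_mul_right (fun η => (1 - cos η) * |η| ^ (α - 2)),
    abs_of_pos (inv_pos.2 hh), smul_eq_mul, ← mul_assoc, h_pow, mul_comm]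

theorem integrable_one_sub_cos_mul_mul_abs_rpow {α : ℝ} (hα : α ∈ Ioo (-1 : ℝ) 1) {h : ℝ}
    (hh : 0 < h) : Integrable (fun ξ : ℝ => (1 - cos (ξ * h)) * |ξ| ^ (α - 2)) := by
  simp_rw [one_sub_cos_mul_mul_abs_rpow_eq α hh]
  exact ((integrable_one_sub_cos_mul_abs_rpow hα).comp_mul_right' hh.ne').const_mul _

theorem heat_kernel_space_increment_general (T : ℝ) (α : ℝ) (hα : α ∈ Ioo (-1 : ℝ) 1)
    (h : ℝ) (hh : 0 < h) :
    Integrable (fun η : ℝ => (1 - Real.cos η) * |η| ^ (α - 2)) ∧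
    ∫ t in Ioc 0 T, ∫ ξ : ℝ,
        (1 - Real.cos (ξ * h)) * Real.exp (-t * ξ ^ 2) * |ξ| ^ α
      ≤ (∫ η : ℝ, (1 - Real.cos η) * |η| ^ (α - 2)) * h ^ (1 - α) := by
  refine ⟨integrable_one_sub_cos_mul_abs_rpow hα, ?_⟩
  rw [← integral_one_sub_cos_mul_mul_abs_rpow α hh]
  refine integral_integral_le_of_lintegral_enorm_le (by fun_prop)
    (integrable_one_sub_cos_mul_mul_abs_rpow hα hh)
    (ae_of_all _ fun ξ => mul_nonneg (one_sub_cos_nonneg _) (rpow_nonneg (abs_nonneg ξ) _)) ?_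
  filter_upwards [Measure.ae_ne volume 0] with ξ hξ
  rw [← Real.enorm_of_nonneg (mul_nonneg (one_sub_cos_nonneg _) (rpow_nonneg (abs_nonneg ξ) _))]
  exact lintegral_Ioc_enorm_mul_exp_neg_mul_sq_le _ α T hξ

theorem heat_kernel_space_increment (T : ℝ) (hT : 0 < T) (α : ℝ) (hα : α ∈ Ioo (-1 : ℝ) 1)
    (h : ℝ) (hh : 0 < h) :
    Integrable (fun η : ℝ => (1 - Real.cos η) * |η| ^ (α - 2)) ∧
    ∫ t in Ioc 0 T, ∫ ξ : ℝ,
        (1 - Real.cos (ξ * h)) * Real.exp (-t * ξ ^ 2) * |ξ| ^ α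
      ≤ (∫ η : ℝ, (1 - Real.cos η) * |η| ^ (α - 2)) * h ^ (1 - α) :=
  heat_kernel_space_increment_general T α hα h hh
end

section
/- For any T>0, α∈(-1,1) and h>0, ∫₀^T ∫_ℝ |e^{-(t+h)ξ²/2} - e^{-tξ²/2}|² |ξ|^α dξ dt ≤ C_α h^{(1-α)/2}, where C_α = ∫_ℝ (1-e^{-η²/2})²/|η|^{2-α} dη < ∞. -/
/-!
Since `|e^{-(t+h)ξ²/2} - e^{-tξ²/2}|² = e^{-tξ²} (1 - e^{-hξ²/2})²` and
`∫_{t > 0} e^{-tξ²} dt = ξ⁻²`, Tonelli bounds the double integral by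
`∫ (1 - e^{-hξ²/2})² |ξ|^{α-2} dξ`, and the substitution `η = √h ξ` turns this into
`h^{(1-α)/2} C_α`. The constant is finite because its integrand is `O(|η|^{2+α})` at `0`
and `O(|η|^{α-2})` at infinity.
-/

open MeasureTheory Real Set

theorem sq_abs_exp_neg_add_sub_exp_neg (t h x : ℝ) :
    |exp (-(t + h) * x / 2) - exp (-t * x / 2)| ^ 2 =
      exp (-(t * x)) * (1 - exp (-(h * x) / 2)) ^ 2 := by
  rw [sq_abs, show -(t + h) * x / 2 = -t * x / 2 + -(h * x) / 2 by ring, exp_add,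
    show -(t * x) = -t * x / 2 + -t * x / 2 by ring, exp_add]
  ring

theorem setLIntegral_exp_neg_mul_le {s : Set ℝ} (hs : s ⊆ Ioi 0) {a : ℝ} (ha : 0 < a) :
    ∫⁻ t in s, ENNReal.ofReal (exp (-(t * a))) ≤ ENNReal.ofReal a⁻¹ := by
  have hint : IntegrableOn (fun t => exp (-a * t)) (Ioi 0) :=
    integrableOn_exp_mul_Ioi (neg_lt_zero.mpr ha) 0
  calc ∫⁻ t in s, ENNReal.ofReal (exp (-(t * a)))
      ≤ ∫⁻ t in Ioi 0, ENNReal.ofReal (exp (-a * t)) := by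
        simp_rw [neg_mul, mul_comm a]
        exact lintegral_mono_set hs
    _ = ENNReal.ofReal a⁻¹ := by
        rw [← ofReal_integral_eq_lintegral_ofReal hint (ae_of_all _ fun t => (exp_pos _).le),
          integral_exp_mul_Ioi (neg_lt_zero.mpr ha), mul_zero, exp_zero, neg_div_neg_eq,
          one_div]

theorem abs_rpow_div_sq {ξ : ℝ} (hξ : ξ ≠ 0) (α : ℝ) :
    |ξ| ^ α / ξ ^ 2 = (|ξ| ^ (2 - α))⁻¹ := by
  rw [← rpow_neg (abs_nonneg ξ), neg_sub, rpow_sub (abs_pos.mpr hξ), rpow_two, sq_abs]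

theorem setLIntegral_exp_neg_mul_sq_le {s : Set ℝ} (hs : s ⊆ Ioi 0) {u ξ : ℝ}
    (hξ : ξ = 0 → u = 0) (α : ℝ) :
    ∫⁻ t in s, ENNReal.ofReal (exp (-(t * ξ ^ 2)) * (u * |ξ| ^ α)) ≤
      ENNReal.ofReal (u / |ξ| ^ (2 - α)) := by
  rcases eq_or_ne ξ 0 with rfl | hξ₀
  · simp [hξ rfl]
  simp_rw [ENNReal.ofReal_mul (exp_pos _).le]
  rw [lintegral_mul_const' _ _ ENNReal.ofReal_ne_top]
  calc (∫⁻ t in s, ENNReal.ofReal (exp (-(t * ξ ^ 2)))) * ENNReal.ofReal (u * |ξ| ^ α)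
      ≤ ENNReal.ofReal (ξ ^ 2)⁻¹ * ENNReal.ofReal (u * |ξ| ^ α) :=
        mul_le_mul_left (setLIntegral_exp_neg_mul_le hs (by positivity)) _
    _ = ENNReal.ofReal (u / |ξ| ^ (2 - α)) := by
        rw [← ENNReal.ofReal_mul (by positivity), div_eq_mul_inv, ← abs_rpow_div_sq hξ₀]
        ring_nf

theorem integral_integral_le_of_forall_lintegral_le {α β : Type*} [MeasurableSpace α]
    [MeasurableSpace β] {μ : Measure α} {ν : Measure β} [SFinite μ] [SFinite ν]
    {F : α → β → ℝ} (hF : Measurable (Function.uncurry F)) (hF₀ : ∀ a b, 0 ≤ F a b)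
    {G : β → ℝ} (hG : Integrable G ν) (hG₀ : 0 ≤ G)
    (hFG : ∀ b, ∫⁻ a, ENNReal.ofReal (F a b) ∂μ ≤ ENNReal.ofReal (G b)) :
    ∫ a, ∫ b, F a b ∂ν ∂μ ≤ ∫ b, G b ∂ν := by
  rw [← ENNReal.ofReal_le_ofReal_iff (integral_nonneg hG₀)]
  calc ENNReal.ofReal (∫ a, ∫ b, F a b ∂ν ∂μ)
      = ‖∫ a, ∫ b, F a b ∂ν ∂μ‖ₑ :=
        (enorm_of_nonneg (integral_nonneg fun a => integral_nonneg (hF₀ a))).symm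
    _ ≤ ∫⁻ a, ∫⁻ b, ENNReal.ofReal (F a b) ∂ν ∂μ := by
        refine (enorm_integral_le_lintegral_enorm _).trans (lintegral_mono fun a => ?_)
        refine (enorm_integral_le_lintegral_enorm _).trans_eq (lintegral_congr fun b => ?_)
        exact enorm_of_nonneg (hF₀ a b)
    _ = ∫⁻ b, ∫⁻ a, ENNReal.ofReal (F a b) ∂μ ∂ν :=
        lintegral_lintegral_swap hF.ennreal_ofReal.aemeasurable
    _ ≤ ∫⁻ b, ENNReal.ofReal (G b) ∂ν := lintegral_mono hFG
    _ = ENNReal.ofReal (∫ b, G b ∂ν) :=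
        (ofReal_integral_eq_lintegral_ofReal hG (ae_of_all _ hG₀)).symm

theorem comp_mul_div_abs_rpow_eq (φ : ℝ → ℝ) {c : ℝ} (hc : 0 < c) (p ξ : ℝ) :
    φ (c * ξ) / |ξ| ^ p = c ^ p * (φ (c * ξ) / |c * ξ| ^ p) := by
  rw [abs_mul, abs_of_pos hc, mul_rpow hc.le (abs_nonneg ξ), div_mul_eq_div_div_swap,
    mul_div_cancel₀ _ (rpow_pos_of_pos hc p).ne']

theorem MeasureTheory.Integrable.div_abs_rpow_comp_mul {φ : ℝ → ℝ} {p : ℝ}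
    (hφ : Integrable fun η => φ η / |η| ^ p) {c : ℝ} (hc : 0 < c) :
    Integrable fun ξ => φ (c * ξ) / |ξ| ^ p := by
  simpa only [comp_mul_div_abs_rpow_eq φ hc p] using
    (hφ.comp_mul_left' hc.ne').const_mul (c ^ p)

theorem integral_div_abs_rpow_comp_mul (φ : ℝ → ℝ) {c : ℝ} (hc : 0 < c) (p : ℝ) :
    ∫ ξ, φ (c * ξ) / |ξ| ^ p = c ^ (p - 1) * ∫ η, φ η / |η| ^ p := by
  simp_rw [comp_mul_div_abs_rpow_eq φ hc p]
  rw [integral_const_mul, Measure.integral_comp_mul_left (fun η => φ η / |η| ^ p),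
    abs_of_pos (inv_pos.mpr hc), smul_eq_mul, ← mul_assoc, rpow_sub_one hc.ne']
  ring

theorem one_sub_exp_neg_sq_div_abs_rpow_le {p : ℝ} (hp₀ : 0 ≤ p) (hp₄ : p ≤ 4) (η : ℝ) :
    (1 - exp (-η ^ 2 / 2)) ^ 2 / |η| ^ p ≤ 2 ^ p * (1 + |η|) ^ (-p) := by
  set u := 1 - exp (-η ^ 2 / 2)
  have hu₀ : 0 ≤ u := sub_nonneg.mpr (exp_le_one_iff.mpr (by nlinarith [sq_nonneg η]))
  have hu₁ : u ≤ 1 := by linarith [exp_pos (-η ^ 2 / 2)]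
  have hu_le : u ≤ η ^ 2 / 2 := by linarith [add_one_le_exp (-η ^ 2 / 2)]
  have hη : 0 ≤ |η| := abs_nonneg η
  have hrhs : 2 ^ p * (1 + |η|) ^ (-p) = 2 ^ p / (1 + |η|) ^ p := by
    rw [rpow_neg (by positivity), div_eq_mul_inv]
  rcases le_total |η| 1 with hη₁ | hη₁
  · calc u ^ 2 / |η| ^ p ≤ 1 := by
          refine div_le_one_of_le₀ ?_ (rpow_nonneg hη _)
          calc u ^ 2 ≤ (η ^ 2 / 2) ^ 2 := pow_le_pow_left₀ hu₀ hu_le 2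
            _ ≤ |η| ^ (4 : ℝ) := by
                rw [show (4 : ℝ) = (4 : ℕ) by norm_num, rpow_natCast, pow_abs]
                nlinarith [le_abs_self (η ^ 4), sq_nonneg η]
            _ ≤ |η| ^ p := rpow_le_rpow_of_exponent_ge' hη hη₁ hp₀ hp₄
      _ ≤ 2 ^ p * (1 + |η|) ^ (-p) := by
          rw [hrhs, ← div_rpow zero_le_two (by positivity)]
          exact one_le_rpow ((one_le_div (by positivity)).mpr (by linarith)) hp₀
  · have hpos : 0 < |η| ^ p := rpow_pos_of_pos (by linarith) p
    calc u ^ 2 / |η| ^ p ≤ 1 / |η| ^ p :=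
          div_le_div_of_nonneg_right (pow_le_one₀ hu₀ hu₁) hpos.le
      _ = 2 ^ p / (2 * |η|) ^ p := by
          rw [mul_rpow zero_le_two hη]
          field_simp
      _ ≤ 2 ^ p * (1 + |η|) ^ (-p) := by
          rw [hrhs]
          gcongr
          linarith

theorem integrable_one_sub_exp_neg_sq_div_abs_rpow {p : ℝ} (hp₁ : 1 < p) (hp₄ : p ≤ 4) :
    Integrable fun η : ℝ => (1 - exp (-η ^ 2 / 2)) ^ 2 / |η| ^ p := by
  have hdom : Integrable fun η : ℝ => 2 ^ p * (1 + ‖η‖) ^ (-p) :=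
    (integrable_one_add_norm (by simpa using hp₁)).const_mul _
  refine hdom.mono' (Measurable.aestronglyMeasurable (by fun_prop))
    (ae_of_all _ fun η => ?_)
  rw [norm_of_nonneg (div_nonneg (sq_nonneg _) (rpow_nonneg (abs_nonneg η) _)), norm_eq_abs]
  exact one_sub_exp_neg_sq_div_abs_rpow_le (by linarith) hp₄ η

theorem heat_kernel_time_increment_general (T : ℝ) (α : ℝ) (hα : α ∈ Ioo (-1 : ℝ) 1)
    (h : ℝ) (hh : 0 < h) :
    Integrable (fun η : ℝ => (1 - Real.exp (-η ^ 2 / 2)) ^ 2 / |η| ^ (2 - α)) ∧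
    ∫ t in Ioc 0 T, ∫ ξ : ℝ,
        |Real.exp (-(t + h) * ξ ^ 2 / 2) - Real.exp (-t * ξ ^ 2 / 2)| ^ 2 * |ξ| ^ α
      ≤ (∫ η : ℝ, (1 - Real.exp (-η ^ 2 / 2)) ^ 2 / |η| ^ (2 - α)) * h ^ ((1 - α) / 2) := by
  have hint := integrable_one_sub_exp_neg_sq_div_abs_rpow (p := 2 - α)
    (by linarith [hα.2]) (by linarith [hα.1])
  refine ⟨hint, ?_⟩
  have hsqrt : 0 < √h := sqrt_pos.mpr hh
  have hsq : ∀ ξ, h * ξ ^ 2 = (√h * ξ) ^ 2 := fun ξ => by rw [mul_pow, sq_sqrt hh.le]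
  calc ∫ t in Ioc 0 T, ∫ ξ : ℝ,
        |exp (-(t + h) * ξ ^ 2 / 2) - exp (-t * ξ ^ 2 / 2)| ^ 2 * |ξ| ^ α
      = ∫ t in Ioc 0 T, ∫ ξ : ℝ,
          exp (-(t * ξ ^ 2)) * ((1 - exp (-(√h * ξ) ^ 2 / 2)) ^ 2 * |ξ| ^ α) := by
        simp_rw [sq_abs_exp_neg_add_sub_exp_neg, hsq, mul_assoc]
    _ ≤ ∫ ξ, (1 - exp (-(√h * ξ) ^ 2 / 2)) ^ 2 / |ξ| ^ (2 - α) := by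
        refine integral_integral_le_of_forall_lintegral_le (by fun_prop)
          (fun t ξ => by positivity) (hint.div_abs_rpow_comp_mul hsqrt)
          (fun ξ => by positivity)
          fun ξ => setLIntegral_exp_neg_mul_sq_le Ioc_subset_Ioi_self (fun hξ => ?_) α
        simp [hξ]
    _ = (∫ η : ℝ, (1 - exp (-η ^ 2 / 2)) ^ 2 / |η| ^ (2 - α)) * h ^ ((1 - α) / 2) := by
        rw [integral_div_abs_rpow_comp_mul (fun η => (1 - exp (-η ^ 2 / 2)) ^ 2) hsqrt,
          sqrt_eq_rpow, ← rpow_mul hh.le, mul_comm]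
        ring_nf

theorem heat_kernel_time_increment (T : ℝ) (hT : 0 < T) (α : ℝ) (hα : α ∈ Ioo (-1 : ℝ) 1)
    (h : ℝ) (hh : 0 < h) :
    Integrable (fun η : ℝ => (1 - Real.exp (-η ^ 2 / 2)) ^ 2 / |η| ^ (2 - α)) ∧
    ∫ t in Ioc 0 T, ∫ ξ : ℝ,
        |Real.exp (-(t + h) * ξ ^ 2 / 2) - Real.exp (-t * ξ ^ 2 / 2)| ^ 2 * |ξ| ^ α
      ≤ (∫ η : ℝ, (1 - Real.exp (-η ^ 2 / 2)) ^ 2 / |η| ^ (2 - α)) * h ^ ((1 - α) / 2) :=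
  heat_kernel_time_increment_general T α hα h hh
end

section
/- For any T>0, α∈(-1,1) and h>0, ∫₀^T ∫_ℝ |sin((t+h)|ξ|)/|ξ| − sin(t|ξ|)/|ξ||² |ξ|^α dξ dt ≤ C_α T h^{1-α}, where C_α = 4∫_ℝ min(1,|η|²)/|η|^{2-α} dη < ∞. -/
/-!
Since `(sin (a + x) - sin a) ^ 2 ≤ 4 min(1, x²)`, the `ξ`-integrand is at most
`4 min(1, h²|ξ|²) |ξ|^(α-2) = 4 h^(2-α) w(hξ)` with `w(η) = min(1, |η|²) / |η|^(2-α)`.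
The substitution `η = hξ` bounds the `ξ`-integral by `4 h^(1-α) ∫ w` uniformly in `t`, and
integrating over `t ∈ (0, T]` gives the factor `T`. The weight `w` is integrable because it is
`|η|^α` near `0` and `|η|^(α-2)` near infinity.
-/

open MeasureTheory Real Set

theorem integrable_comp_abs_of_integrableOn_Ioi {E : Type*} [NormedAddCommGroup E]
    {f : ℝ → E} (hf : IntegrableOn f (Ioi 0)) : Integrable (fun x => f |x|) := by
  have hpos : IntegrableOn (fun x => f |x|) (Ioi 0) :=
    hf.congr_fun (fun x hx => by rw [abs_of_pos (mem_Ioi.mp hx)]) measurableSet_Ioi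
  have hneg : IntegrableOn (fun x => f |x|) (Iic 0) := by
    rw [← Measure.map_neg_eq_self (volume : Measure ℝ),
      (show MeasurableEmbedding fun x : ℝ => -x from
        (Homeomorph.neg ℝ).measurableEmbedding).integrableOn_map_iff]
    simp_rw [Function.comp_def, abs_neg, neg_preimage, neg_Iic, neg_zero]
    exact (integrableOn_Ici_iff_integrableOn_Ioi).mpr hpos
  rw [← integrableOn_univ, ← Iic_union_Ioi (a := (0 : ℝ))]
  exact hneg.union hpos

theorem integrableOn_Ioi_min_one_sq_div_rpow {α : ℝ} (hα₁ : -1 < α) (hα₂ : α < 1) :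
    IntegrableOn (fun r : ℝ => min 1 (r ^ 2) / r ^ (2 - α)) (Ioi 0) := by
  have h_near : IntegrableOn (fun r : ℝ => min 1 (r ^ 2) / r ^ (2 - α)) (Ioc 0 1) := by
    refine ((intervalIntegral.intervalIntegrable_rpow' hα₁).1).congr_fun
      (fun r ⟨hr₀, hr₁⟩ => ?_) measurableSet_Ioc
    rw [min_eq_right (pow_le_one₀ hr₀.le hr₁), rpow_sub hr₀, rpow_two,
      div_div_cancel₀ (by positivity)]
  have h_far : IntegrableOn (fun r : ℝ => min 1 (r ^ 2) / r ^ (2 - α)) (Ioi 1) := by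
    refine (integrableOn_Ioi_rpow_of_lt (by linarith : α - 2 < -1) one_pos).congr_fun
      (fun r (hr : 1 < r) => ?_) measurableSet_Ioi
    beta_reduce
    rw [min_eq_left (one_le_pow₀ hr.le), show α - 2 = -(2 - α) by ring,
      rpow_neg (zero_le_one.trans hr.le), one_div]
  rw [← Ioc_union_Ioi_eq_Ioi zero_le_one]
  exact h_near.union h_far

noncomputable def cutoffWeight (α η : ℝ) : ℝ := min 1 (|η| ^ 2) / |η| ^ (2 - α)

theorem integrable_cutoffWeight {α : ℝ} (hα₁ : -1 < α) (hα₂ : α < 1) :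
    Integrable (cutoffWeight α) :=
  integrable_comp_abs_of_integrableOn_Ioi (integrableOn_Ioi_min_one_sq_div_rpow hα₁ hα₂)

theorem sq_sin_add_sub_sin_le (t x : ℝ) : (sin (t + x) - sin t) ^ 2 ≤ 4 * min 1 (x ^ 2) := by
  have h_half : sin (x / 2) ^ 2 ≤ min 1 (x ^ 2) :=
    le_min (sin_sq_le_one _) <| (sq_le_sq.mpr (abs_sin_le_abs.trans (by
      rw [abs_div, abs_two]; linarith [abs_nonneg x])))
  calc (sin (t + x) - sin t) ^ 2 = 4 * sin (x / 2) ^ 2 * cos ((2 * t + x) / 2) ^ 2 := by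
        rw [sin_sub_sin]; ring_nf
    _ ≤ 4 * min 1 (x ^ 2) * 1 := by gcongr; exact cos_sq_le_one _
    _ = 4 * min 1 (x ^ 2) := mul_one _

theorem rpow_mul_cutoffWeight_mul {h : ℝ} (hh : 0 < h) (α : ℝ) {ξ : ℝ} (hξ : ξ ≠ 0) :
    h ^ (2 - α) * cutoffWeight α (h * ξ) = min 1 ((h * |ξ|) ^ 2) / |ξ| ^ 2 * |ξ| ^ α := by
  have hr : 0 < |ξ| := abs_pos.mpr hξ
  rw [cutoffWeight, abs_mul, abs_of_pos hh, mul_rpow hh.le hr.le, rpow_sub hr, rpow_two]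
  field_simp

theorem wave_increment_sq_mul_rpow_le {h : ℝ} (hh : 0 < h) (α t ξ : ℝ) :
    abs (sin ((t + h) * |ξ|) / |ξ| - sin (t * |ξ|) / |ξ|) ^ 2 * |ξ| ^ α
      ≤ 4 * h ^ (2 - α) * cutoffWeight α (h * ξ) := by
  rcases eq_or_ne ξ 0 with rfl | hξ
  · simp [cutoffWeight]
  calc abs (sin ((t + h) * |ξ|) / |ξ| - sin (t * |ξ|) / |ξ|) ^ 2 * |ξ| ^ α
      = (sin (t * |ξ| + h * |ξ|) - sin (t * |ξ|)) ^ 2 / |ξ| ^ 2 * |ξ| ^ α := by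
        rw [← sub_div, sq_abs, div_pow, add_mul]
    _ ≤ 4 * min 1 ((h * |ξ|) ^ 2) / |ξ| ^ 2 * |ξ| ^ α := by
        gcongr; exact sq_sin_add_sub_sin_le _ _
    _ = 4 * h ^ (2 - α) * cutoffWeight α (h * ξ) := by
        rw [mul_assoc 4, rpow_mul_cutoffWeight_mul hh α hξ]; ring

theorem integral_wave_increment_le {α : ℝ} (hα₁ : -1 < α) (hα₂ : α < 1) {h : ℝ} (hh : 0 < h)
    (t : ℝ) :
    ∫ ξ : ℝ, abs (sin ((t + h) * |ξ|) / |ξ| - sin (t * |ξ|) / |ξ|) ^ 2 * |ξ| ^ α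
      ≤ 4 * (∫ η, cutoffWeight α η) * h ^ (1 - α) := by
  have h_scale : h ^ (2 - α) * |h⁻¹| = h ^ (1 - α) := by
    rw [abs_inv, abs_of_pos hh, ← rpow_neg_one, ← rpow_add hh]; ring_nf
  calc ∫ ξ : ℝ, abs (sin ((t + h) * |ξ|) / |ξ| - sin (t * |ξ|) / |ξ|) ^ 2 * |ξ| ^ α
      ≤ ∫ ξ, 4 * h ^ (2 - α) * cutoffWeight α (h * ξ) :=
        integral_mono_of_nonneg (.of_forall fun _ => by positivity)
          (((integrable_cutoffWeight hα₁ hα₂).comp_mul_left' hh.ne').const_mul _)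
          (.of_forall (wave_increment_sq_mul_rpow_le hh α t))
    _ = 4 * (∫ η, cutoffWeight α η) * h ^ (1 - α) := by
        rw [integral_const_mul, Measure.integral_comp_mul_left, smul_eq_mul, ← h_scale]; ring

theorem wave_kernel_time_increment (T : ℝ) (hT : 0 < T) (α : ℝ) (hα : α ∈ Ioo (-1 : ℝ) 1)
    (h : ℝ) (hh : 0 < h) :
    Integrable (fun η : ℝ => min 1 (|η| ^ 2) / |η| ^ (2 - α)) ∧
    ∫ t in Ioc 0 T, ∫ ξ : ℝ,
        (abs (Real.sin ((t + h) * |ξ|) / |ξ| - Real.sin (t * |ξ|) / |ξ|)) ^ 2 * |ξ| ^ α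
      ≤ (4 * ∫ η : ℝ, min 1 (|η| ^ 2) / |η| ^ (2 - α)) * T * h ^ (1 - α) := by
  obtain ⟨hα₁, hα₂⟩ := hα
  refine ⟨integrable_cutoffWeight hα₁ hα₂, ?_⟩
  change _ ≤ (4 * ∫ η, cutoffWeight α η) * T * h ^ (1 - α)
  calc _ ≤ ‖∫ t in Ioc 0 T, ∫ ξ : ℝ,
          abs (sin ((t + h) * |ξ|) / |ξ| - sin (t * |ξ|) / |ξ|) ^ 2 * |ξ| ^ α‖ := le_norm_self _
    _ ≤ 4 * (∫ η, cutoffWeight α η) * h ^ (1 - α) * volume.real (Ioc 0 T) :=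
        norm_setIntegral_le_of_norm_le_const measure_Ioc_lt_top fun t _ => by
          rw [norm_of_nonneg (integral_nonneg fun _ => by positivity)]
          exact integral_wave_increment_le hα₁ hα₂ hh t
    _ = (4 * ∫ η, cutoffWeight α η) * T * h ^ (1 - α) := by
        rw [volume_real_Ioc_of_le hT.le]; ring
end

section
/- Existence, uniqueness, and continuity of the solution operator for the deterministic wave integral equation: For every continuous function η ∈ C([0,T]×ℝ) and every Lipschitz continuous b: ℝ → ℝ, the equation z(t,x) = (1/2)∫₀^t ∫_{x−t+s}^{x+t−s} b(z(s,y)) dy ds + η(t,x) has a unique solution z ∈ C([0,T]×ℝ). Moreover the solution operator F: C([0,T]×ℝ) → C([0,T]×ℝ), F(η) = z, is continuous with respect to the topology of uniform convergence on compact sets. -/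
/-!
The right-hand side at `(t, x)` only sees `z` on the backward light cone of `(t, x)`, and the
compact trapezoids `|x| ≤ R + T - t` contain the cones of their points, so the problem localises
to them. There, if two inputs differ by at most `ψ s` at time `s`, the Picard outputs differ by at
most `|η₁ - η₂| + K T ∫₀ᵗ ψ` (`K` a Lipschitz constant of `b`); iterating gives the Gronwall bound
`|z₁ - z₂| ≤ δ e^{KTt} + C (KTt)ᵏ / k!`. With `δ = 0` a power of the Picard map is a contraction,
which gives a solution on each trapezoid; letting `k → ∞` gives uniqueness on each trapezoid and
the bound `e^{KT²} δ` behind the continuity of the solution operator. The local solutions agree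
on overlaps and glue to a global one.
-/

open MeasureTheory Real Set
open Filter Topology NNReal
open scoped Nat

namespace WaveEquation

abbrev Strip (T : ℝ) : Type := Icc (0 : ℝ) T × ℝ

variable {T R : ℝ}

def dependenceDomain (T R : ℝ) : Set (Strip T) := {p | |p.2| ≤ R + T - p.1}

lemma dependenceDomain_mono {R' : ℝ} (h : R ≤ R') :
    dependenceDomain T R ⊆ dependenceDomain T R' :=
  fun p (hp : |p.2| ≤ R + T - p.1) => show |p.2| ≤ R' + T - p.1 by linarith

lemma mem_dependenceDomain_abs (p : Strip T) : p ∈ dependenceDomain T |p.2| :=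
  show |p.2| ≤ |p.2| + T - p.1 by linarith [p.1.2.2]

lemma isCompact_dependenceDomain (T R : ℝ) : IsCompact (dependenceDomain T R) := by
  refine (isCompact_univ.prod (isCompact_Icc (a := -(R + T)) (b := R + T))).of_isClosed_subset
    (isClosed_le (by fun_prop) (by fun_prop))
    fun p (hp : |p.2| ≤ R + T - p.1) => ⟨trivial, ?_⟩
  exact abs_le.mp (hp.trans (by linarith [p.1.2.1]))

lemma exists_subset_dependenceDomain {S : Set (Strip T)} (hS : IsCompact S) :
    ∃ R, S ⊆ dependenceDomain T R := by
  obtain ⟨R, hR⟩ := (hS.image (continuous_abs.comp continuous_snd)).bddAbove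
  refine ⟨R, fun p hp => ?_⟩
  have : |p.2| ≤ R := hR (mem_image_of_mem _ hp)
  show |p.2| ≤ R + T - p.1
  linarith [p.1.2.2]

lemma mem_dependenceDomain_of_mem_cone (hT : 0 ≤ T) {q : Strip T}
    (hq : q ∈ dependenceDomain T R) {s y : ℝ} (hs : s ∈ Icc 0 (q.1 : ℝ))
    (hy : y ∈ Icc (q.2 - q.1 + s) (q.2 + q.1 - s)) :
    (projIcc 0 T hT s, y) ∈ dependenceDomain T R := by
  have hq' : |q.2| ≤ R + T - q.1 := hq
  show |y| ≤ R + T - (projIcc 0 T hT s : ℝ)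
  rw [projIcc_of_mem hT ⟨hs.1, hs.2.trans q.1.2.2⟩]
  rw [abs_le] at hq' ⊢
  constructor <;> linarith [hy.1, hy.2]

/-- Clamping `x` into the trapezoid extends functions on it continuously; since `picard` at a
point of the trapezoid only reads values on it (`picard_congr`), the choice of extension is
immaterial. -/
def clamp (T R : ℝ) (p : Strip T) : Strip T :=
  (p.1, max (-(R + T - p.1)) (min p.2 (R + T - p.1)))

lemma continuous_clamp : Continuous (clamp T R) := by
  unfold clamp; fun_prop

lemma clamp_mem (hR : 0 ≤ R) (p : Strip T) : clamp T R p ∈ dependenceDomain T R := by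
  show |max _ _| ≤ R + T - p.1
  exact abs_le.mpr ⟨le_max_left _ _, max_le (by linarith [p.1.2.2]) (min_le_right _ _)⟩

lemma clamp_eq_self {p : Strip T} (hp : p ∈ dependenceDomain T R) : clamp T R p = p := by
  obtain ⟨h₁, h₂⟩ := abs_le.mp (show |p.2| ≤ R + T - p.1 from hp)
  simp only [clamp, min_eq_left h₂, max_eq_right h₁]

lemma continuous_intervalIntegral {P : Type*} [TopologicalSpace P] {f : P → ℝ → ℝ}
    (hf : Continuous f.uncurry) {α β : P → ℝ} (hα : Continuous α) (hβ : Continuous β) :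
    Continuous fun r => ∫ y in α r..β r, f r y := by
  have hsplit : ∀ r,
      (∫ y in α r..β r, f r y) = (∫ y in 0..β r, f r y) - ∫ y in 0..α r, f r y :=
    fun r => (intervalIntegral.integral_interval_sub_left
      ((hf.comp (Continuous.prodMk_right r)).intervalIntegrable _ _)
      ((hf.comp (Continuous.prodMk_right r)).intervalIntegrable _ _)).symm
  simp only [hsplit]
  exact (intervalIntegral.continuous_parametric_intervalIntegral_of_continuous hf hβ).sub
    (intervalIntegral.continuous_parametric_intervalIntegral_of_continuous hf hα)

noncomputable def waveIntegral (g : ℝ × ℝ → ℝ) (t x : ℝ) : ℝ :=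
  ∫ s in (0 : ℝ)..t, ∫ y in x - t + s..x + t - s, g (s, y)

lemma continuous_waveIntegral {P : Type*} [TopologicalSpace P] {g : ℝ × ℝ → ℝ}
    (hg : Continuous g) {t x : P → ℝ} (ht : Continuous t) (hx : Continuous x) :
    Continuous fun r => waveIntegral g (t r) (x r) :=
  continuous_intervalIntegral
    (continuous_intervalIntegral (f := fun (r : P × ℝ) y => g (r.2, y)) (by fun_prop)
      (by fun_prop) (by fun_prop)) continuous_const ht

lemma intervalIntegrable_waveIntegral_inner {g : ℝ × ℝ → ℝ} (hg : Continuous g) (t x : ℝ) :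
    IntervalIntegrable (fun s => ∫ y in x - t + s..x + t - s, g (s, y)) volume 0 t :=
  (continuous_intervalIntegral (f := fun s y => g (s, y)) (by fun_prop) (by fun_prop)
    (by fun_prop)).intervalIntegrable _ _

lemma waveIntegral_sub {g₁ g₂ : ℝ × ℝ → ℝ} (h₁ : Continuous g₁) (h₂ : Continuous g₂)
    (t x : ℝ) : waveIntegral g₁ t x - waveIntegral g₂ t x = waveIntegral (g₁ - g₂) t x := by
  rw [waveIntegral, waveIntegral, ← intervalIntegral.integral_sub
    (intervalIntegrable_waveIntegral_inner h₁ t x) (intervalIntegrable_waveIntegral_inner h₂ t x)]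
  refine intervalIntegral.integral_congr fun s _ => ?_
  exact (intervalIntegral.integral_sub
    ((h₁.comp (Continuous.prodMk_right s)).intervalIntegrable _ _)
    ((h₂.comp (Continuous.prodMk_right s)).intervalIntegrable _ _)).symm

lemma waveIntegral_congr {g₁ g₂ : ℝ × ℝ → ℝ} {t x : ℝ} (ht : 0 ≤ t)
    (h : ∀ s ∈ Icc 0 t, ∀ y ∈ Icc (x - t + s) (x + t - s), g₁ (s, y) = g₂ (s, y)) :
    waveIntegral g₁ t x = waveIntegral g₂ t x := by
  refine intervalIntegral.integral_congr fun s hs =>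
    intervalIntegral.integral_congr fun y hy => ?_
  rw [uIcc_of_le ht] at hs
  rw [uIcc_of_le (by linarith [hs.2])] at hy
  exact h s hs y hy

lemma abs_waveIntegral_le {g : ℝ × ℝ → ℝ} {ψ : ℝ → ℝ} {t x τ : ℝ} (ht : 0 ≤ t)
    (htτ : t ≤ τ) (hψ : Continuous ψ)
    (hg : ∀ s ∈ Icc 0 t, ∀ y ∈ Icc (x - t + s) (x + t - s), |g (s, y)| ≤ ψ s) :
    |waveIntegral g t x| ≤ 2 * τ * ∫ s in (0 : ℝ)..t, ψ s := by
  have hinner : ∀ s ∈ Ioc 0 t, ‖∫ y in x - t + s..x + t - s, g (s, y)‖ ≤ 2 * τ * ψ s := by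
    intro s hs
    have hψs : 0 ≤ ψ s :=
      (abs_nonneg _).trans (hg s ⟨hs.1.le, hs.2⟩ x ⟨by linarith [hs.2], by linarith [hs.2]⟩)
    refine (intervalIntegral.norm_integral_le_of_norm_le_const (C := ψ s)
      fun y hy => ?_).trans ?_
    · rw [uIoc_of_le (by linarith [hs.2])] at hy
      exact hg s ⟨hs.1.le, hs.2⟩ y ⟨hy.1.le, hy.2⟩
    · rw [abs_of_nonneg (by linarith [hs.2])]
      nlinarith [hs.1]
  rw [← intervalIntegral.integral_const_mul]
  exact intervalIntegral.norm_integral_le_of_norm_le ht (Eventually.of_forall hinner)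
    ((continuous_const.mul hψ).intervalIntegrable _ _)

lemma mul_integral_exp_add_pow_div_factorial (a δ C t : ℝ) (k : ℕ) :
    a * ∫ s in (0 : ℝ)..t, (δ * exp (a * s) + C * (a * s) ^ k / k !) =
      δ * (exp (a * t) - 1) + C * (a * t) ^ (k + 1) / (k + 1)! := by
  have hderiv : ∀ s ∈ uIcc 0 t, HasDerivAt
      (fun s => δ * exp (a * s) + C * (a * s) ^ (k + 1) / (k + 1)!)
      (a * (δ * exp (a * s) + C * (a * s) ^ k / k !)) s := by
    intro s _
    have hlin := (hasDerivAt_id s).const_mul a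
    refine ((hlin.exp.const_mul δ).add (((hlin.pow (k + 1)).const_mul C).div_const
      ((k + 1)! : ℝ))).congr_deriv ?_
    simp only [id, mul_one, add_tsub_cancel_right, Nat.factorial_succ, Nat.cast_mul]
    field_simp
  have hcont : Continuous fun s => a * (δ * exp (a * s) + C * (a * s) ^ k / k !) := by fun_prop
  rw [← intervalIntegral.integral_const_mul,
    intervalIntegral.integral_eq_sub_of_hasDerivAt hderiv (hcont.intervalIntegrable _ _)]
  rw [mul_zero, exp_zero, zero_pow k.succ_ne_zero]
  ring

variable {b : ℝ → ℝ} {K : ℝ≥0}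

noncomputable def picard (hT : 0 ≤ T) (b : ℝ → ℝ) (η u : C(Strip T, ℝ)) (p : Strip T) : ℝ :=
  1 / 2 * waveIntegral (fun q => b (u (projIcc 0 T hT q.1, q.2))) p.1 p.2 + η p

section Picard

variable (hT : 0 ≤ T)
include hT

lemma continuous_picard (hb : Continuous b) (η u : C(Strip T, ℝ)) :
    Continuous (picard hT b η u) :=
  (continuous_const.mul (continuous_waveIntegral (by fun_prop) (by fun_prop) (by fun_prop))).add
    η.continuous

lemma picard_congr {η u₁ u₂ : C(Strip T, ℝ)} (h : EqOn u₁ u₂ (dependenceDomain T R))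
    {q : Strip T} (hq : q ∈ dependenceDomain T R) :
    picard hT b η u₁ q = picard hT b η u₂ q := by
  unfold picard
  congr 2
  exact waveIntegral_congr q.1.2.1 fun s hs y hy =>
    congrArg b (h (mem_dependenceDomain_of_mem_cone hT hq hs hy))

lemma abs_picard_sub_picard_le (hb : LipschitzWith K b) {η₁ η₂ u₁ u₂ : C(Strip T, ℝ)}
    {ψ : ℝ → ℝ} (hψ : Continuous ψ)
    (hu : ∀ p ∈ dependenceDomain T R, |u₁ p - u₂ p| ≤ ψ p.1)
    {q : Strip T} (hq : q ∈ dependenceDomain T R) :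
    |picard hT b η₁ u₁ q - picard hT b η₂ u₂ q| ≤
      |η₁ q - η₂ q| + K * T * ∫ s in (0 : ℝ)..q.1, ψ s := by
  set g₁ : ℝ × ℝ → ℝ := fun r => b (u₁ (projIcc 0 T hT r.1, r.2))
  set g₂ : ℝ × ℝ → ℝ := fun r => b (u₂ (projIcc 0 T hT r.1, r.2))
  have hg : ∀ u : C(Strip T, ℝ),
      Continuous fun r : ℝ × ℝ => b (u (projIcc 0 T hT r.1, r.2)) :=
    fun u => by have := hb.continuous; fun_prop
  have hW : |waveIntegral (g₁ - g₂) q.1 q.2| ≤ 2 * T * ∫ s in (0 : ℝ)..q.1, K * ψ s := by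
    refine abs_waveIntegral_le q.1.2.1 q.1.2.2 (continuous_const.mul hψ) fun s hs y hy => ?_
    have hp : |u₁ (projIcc 0 T hT s, y) - u₂ (projIcc 0 T hT s, y)| ≤ ψ s := by
      simpa only [projIcc_of_mem hT ⟨hs.1, hs.2.trans q.1.2.2⟩] using
        hu _ (mem_dependenceDomain_of_mem_cone hT hq hs hy)
    calc |g₁ (s, y) - g₂ (s, y)| ≤ K * |u₁ _ - u₂ _| := by
          simpa only [Real.dist_eq] using hb.dist_le_mul _ _
      _ ≤ K * ψ s := by gcongr
  rw [intervalIntegral.integral_const_mul] at hW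
  have hsplit : picard hT b η₁ u₁ q - picard hT b η₂ u₂ q =
      1 / 2 * waveIntegral (g₁ - g₂) q.1 q.2 + (η₁ q - η₂ q) := by
    rw [← waveIntegral_sub (hg u₁) (hg u₂)]
    unfold picard
    ring
  rw [hsplit]
  calc _ ≤ |1 / 2 * waveIntegral (g₁ - g₂) q.1 q.2| + |η₁ q - η₂ q| := abs_add_le _ _
    _ ≤ _ := by rw [abs_mul, abs_of_pos one_half_pos]; linarith

lemma abs_sub_le_of_eqOn_picard_succ (hb : LipschitzWith K b) {η₁ η₂ : C(Strip T, ℝ)}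
    {v₁ v₂ : ℕ → C(Strip T, ℝ)} {C δ : ℝ} (hδ : 0 ≤ δ)
    (hη : ∀ q ∈ dependenceDomain T R, |η₁ q - η₂ q| ≤ δ)
    (hC : ∀ q ∈ dependenceDomain T R, |v₁ 0 q - v₂ 0 q| ≤ C)
    (hv₁ : ∀ k, EqOn (v₁ (k + 1)) (picard hT b η₁ (v₁ k)) (dependenceDomain T R))
    (hv₂ : ∀ k, EqOn (v₂ (k + 1)) (picard hT b η₂ (v₂ k)) (dependenceDomain T R)) (k : ℕ) :
    ∀ q ∈ dependenceDomain T R,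
      |v₁ k q - v₂ k q| ≤ δ * exp (K * T * q.1) + C * (K * T * q.1) ^ k / k ! := by
  -- `δ e^{KTs}` reproduces itself under `ψ ↦ δ + KT ∫₀ᵗ ψ`, while `(KTs)ᵏ / k!` gains a factor.
  induction k with
  | zero =>
    intro q hq
    simpa using (hC q hq).trans (le_add_of_nonneg_left (by positivity))
  | succ k ih =>
    intro q hq
    rw [hv₁ k hq, hv₂ k hq]
    refine (abs_picard_sub_picard_le hT hb
      (ψ := fun s => δ * exp (K * T * s) + C * (K * T * s) ^ k / k !) (by fun_prop) ih hq).trans ?_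
    rw [mul_integral_exp_add_pow_div_factorial]
    linarith [hη q hq]

lemma abs_sub_le_of_eqOn_picard (hb : LipschitzWith K b) {η₁ η₂ u₁ u₂ : C(Strip T, ℝ)}
    (hu₁ : EqOn u₁ (picard hT b η₁ u₁) (dependenceDomain T R))
    (hu₂ : EqOn u₂ (picard hT b η₂ u₂) (dependenceDomain T R)) {δ : ℝ} (hδ : 0 ≤ δ)
    (hη : ∀ q ∈ dependenceDomain T R, |η₁ q - η₂ q| ≤ δ) :
    ∀ q ∈ dependenceDomain T R, |u₁ q - u₂ q| ≤ exp (K * T * T) * δ := by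
  obtain ⟨C, hC⟩ := (isCompact_dependenceDomain T R).exists_bound_of_continuousOn
    (u₁ - u₂).continuous.continuousOn
  intro q hq
  have hbound := abs_sub_le_of_eqOn_picard_succ hT hb (v₁ := fun _ => u₁) (v₂ := fun _ => u₂)
    (C := C) hδ hη hC (fun _ => hu₁) (fun _ => hu₂)
  have hlim : Tendsto (fun k : ℕ => δ * exp (K * T * q.1) + C * (K * T * q.1) ^ k / k !) atTop
      (𝓝 (δ * exp (K * T * q.1))) := by
    simpa [mul_div_assoc] using
      ((FloorSemiring.tendsto_pow_div_factorial_atTop (K * T * q.1 : ℝ)).const_mul C).const_add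
        (δ * exp (K * T * q.1))
  calc |u₁ q - u₂ q| ≤ δ * exp (K * T * q.1) := ge_of_tendsto' hlim fun k => hbound k q hq
    _ ≤ exp (K * T * T) * δ := by rw [mul_comm]; gcongr; exact q.1.2.2

lemma eqOn_of_eqOn_picard (hb : LipschitzWith K b) {η u₁ u₂ : C(Strip T, ℝ)}
    (hu₁ : EqOn u₁ (picard hT b η u₁) (dependenceDomain T R))
    (hu₂ : EqOn u₂ (picard hT b η u₂) (dependenceDomain T R)) :
    EqOn u₁ u₂ (dependenceDomain T R) := fun q hq => by
  simpa [sub_eq_zero] using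
    abs_sub_le_of_eqOn_picard hT hb hu₁ hu₂ le_rfl (fun q _ => by simp) q hq

end Picard

instance : CompactSpace (dependenceDomain T R) :=
  isCompact_iff_compactSpace.mp (isCompact_dependenceDomain T R)

section LocalExistence

variable (hT : 0 ≤ T) (hR : 0 ≤ R)

def clampMap : C(Strip T, dependenceDomain T R) :=
  ⟨fun p => ⟨clamp T R p, clamp_mem hR p⟩, continuous_clamp.subtype_mk _⟩

lemma comp_clampMap_apply (w : C(dependenceDomain T R, ℝ)) {q : Strip T}
    (hq : q ∈ dependenceDomain T R) : w.comp (clampMap hR) q = w ⟨q, hq⟩ :=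
  congrArg w (Subtype.ext (clamp_eq_self hq))

noncomputable def localPicard (hb : Continuous b) (η : C(Strip T, ℝ))
    (w : C(dependenceDomain T R, ℝ)) : C(dependenceDomain T R, ℝ) :=
  ⟨fun q => picard hT b η (w.comp (clampMap hR)) q,
    (continuous_picard hT hb η _).comp continuous_subtype_val⟩

include hT hR in
lemma dist_localPicard_iterate_le (hb : LipschitzWith K b) (η : C(Strip T, ℝ)) (k : ℕ)
    (w₁ w₂ : C(dependenceDomain T R, ℝ)) :
    dist ((localPicard hT hR hb.continuous η)^[k] w₁) ((localPicard hT hR hb.continuous η)^[k] w₂)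
      ≤ (K * T * T) ^ k / k ! * dist w₁ w₂ := by
  set Ψ := localPicard hT hR hb.continuous η
  have hv : ∀ w k, EqOn ((Ψ^[k + 1] w).comp (clampMap hR))
      (picard hT b η ((Ψ^[k] w).comp (clampMap hR))) (dependenceDomain T R) :=
    fun w k q hq => by
      rw [comp_clampMap_apply hR _ hq, Function.iterate_succ_apply']
      rfl
  have hC : ∀ q ∈ dependenceDomain T R,
      |w₁.comp (clampMap hR) q - w₂.comp (clampMap hR) q| ≤ dist w₁ w₂ := fun q _ => by
    rw [← Real.dist_eq]
    exact ContinuousMap.dist_apply_le_dist (f := w₁) (g := w₂) (clampMap hR q)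
  refine (ContinuousMap.dist_le (by positivity)).2 fun q => ?_
  have hbound := abs_sub_le_of_eqOn_picard_succ hT hb
    (v₁ := fun k => (Ψ^[k] w₁).comp (clampMap hR)) (v₂ := fun k => (Ψ^[k] w₂).comp (clampMap hR))
    le_rfl (fun q _ => by simp) hC (hv w₁) (hv w₂) k q q.2
  rw [comp_clampMap_apply hR _ q.2, comp_clampMap_apply hR _ q.2] at hbound
  rw [Real.dist_eq]
  refine hbound.trans ?_
  rw [zero_mul, zero_add, mul_div_assoc, mul_comm]
  have hq₀ := q.1.1.2.1
  gcongr
  exact q.1.1.2.2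

include hT hR in
lemma exists_eqOn_picard (hb : LipschitzWith K b) (η : C(Strip T, ℝ)) :
    ∃ u : C(Strip T, ℝ), EqOn u (picard hT b η u) (dependenceDomain T R) := by
  have : Nonempty (dependenceDomain T R) := ⟨clampMap hR (⟨0, le_rfl, hT⟩, 0)⟩
  obtain ⟨m, hm⟩ : ∃ m : ℕ, (K * T * T) ^ m / m ! < 1 :=
    ((FloorSemiring.tendsto_pow_div_factorial_atTop (K * T * T : ℝ)).eventually
      (gt_mem_nhds one_pos)).exists
  have hcontr : ContractingWith ⟨(K * T * T) ^ m / m !, by positivity⟩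
      (localPicard hT hR hb.continuous η)^[m] :=
    ⟨hm, LipschitzWith.of_dist_le_mul (dist_localPicard_iterate_le hT hR hb η m)⟩
  refine ⟨(hcontr.fixedPoint _).comp (clampMap hR), fun q hq => ?_⟩
  rw [comp_clampMap_apply hR _ hq]
  exact (DFunLike.congr_fun hcontr.isFixedPt_fixedPoint_iterate ⟨q, hq⟩).symm

end LocalExistence

lemma exists_eq_picard (hT : 0 ≤ T) (hb : LipschitzWith K b) (η : C(Strip T, ℝ)) :
    ∃ u : C(Strip T, ℝ), ⇑u = picard hT b η u := by
  choose sol hsol using fun R (hR : 0 ≤ R) => exists_eqOn_picard hT hR hb η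
  have hagree : ∀ R {v : C(Strip T, ℝ)},
      EqOn v (picard hT b η v) (dependenceDomain T R) →
      ∀ q ∈ dependenceDomain T R, sol |q.2| (abs_nonneg _) q = v q := by
    intro R v hv q hq
    have hq' : q ∈ dependenceDomain T (min R |q.2|) := by
      rcases min_choice R |q.2| with h | h <;> rw [h]
      exacts [hq, mem_dependenceDomain_abs q]
    exact eqOn_of_eqOn_picard hT hb
      ((hsol _ _).mono (dependenceDomain_mono (min_le_right _ _)))
      (hv.mono (dependenceDomain_mono (min_le_left _ _))) hq'
  have hcont : Continuous fun p : Strip T => sol |p.2| (abs_nonneg _) p := by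
    refine continuous_iff_continuousAt.2 fun p₀ => ?_
    have hR : 0 ≤ |p₀.2| + 1 := by positivity
    have hopen : IsOpen {p : Strip T | |p.2| < |p₀.2| + 1} :=
      isOpen_lt (by fun_prop) continuous_const
    have hnear : ∀ᶠ p in 𝓝 p₀, sol _ hR p = sol |p.2| (abs_nonneg _) p :=
      mem_of_superset (hopen.mem_nhds (lt_add_one |p₀.2|)) fun p (hp : |p.2| < |p₀.2| + 1) =>
        (hagree _ (hsol _ hR) p (show |p.2| ≤ |p₀.2| + 1 + T - p.1 by linarith [p.1.2.2])).symm
    exact (sol _ hR).continuous.continuousAt.congr hnear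
  refine ⟨⟨_, hcont⟩, funext fun p => ?_⟩
  have hp := mem_dependenceDomain_abs p
  exact (hsol _ _ hp).trans
    (picard_congr hT (fun q hq => (hagree _ (hsol _ _) q hq).symm) hp)

lemma continuous_of_forall_isCompact_abs_sub_le {X Y : Type*} [TopologicalSpace X]
    [TopologicalSpace Y] {F : C(X, ℝ) → C(Y, ℝ)}
    (hF : ∀ S : Set Y, IsCompact S → ∃ S' : Set X, IsCompact S' ∧ ∃ A : ℝ, ∀ η η' δ, 0 < δ →
      (∀ q ∈ S', |η q - η' q| ≤ δ) → ∀ p ∈ S, |F η p - F η' p| ≤ A * δ) :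
    Continuous F := by
  refine continuous_iff_continuousAt.2 fun η =>
    ContinuousMap.tendsto_iff_forall_isCompact_tendstoUniformlyOn.2 fun S hS => ?_
  obtain ⟨S', hS', A, hA⟩ := hF S hS
  refine Metric.tendstoUniformlyOn_iff.2 fun ε hε => ?_
  have hδ : 0 < ε / (|A| + 1) := by positivity
  have hnear := Metric.tendstoUniformlyOn_iff.1
    (ContinuousMap.tendsto_iff_forall_isCompact_tendstoUniformlyOn.1 (tendsto_id (x := 𝓝 η)) S' hS')
    _ hδ
  filter_upwards [hnear] with η' hη' p hp
  rw [Real.dist_eq]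
  calc |F η p - F η' p| ≤ A * (ε / (|A| + 1)) :=
        hA η η' _ hδ (fun q hq => by simpa only [Real.dist_eq, id] using (hη' q hq).le) p hp
    _ ≤ |A| * (ε / (|A| + 1)) := by gcongr; exact le_abs_self A
    _ < ε := by
      rw [mul_div_assoc', div_lt_iff₀ (by positivity)]
      nlinarith

end WaveEquation

open WaveEquation in
theorem wave_solution_operator (T : ℝ) (hT : 0 < T) (b : ℝ → ℝ) (L : ℝ)
    (hbLip : ∀ x y, |b x - b y| ≤ L * |x - y|) :
    ∃ F : C(Set.Icc (0 : ℝ) T × ℝ, ℝ) → C(Set.Icc (0 : ℝ) T × ℝ, ℝ),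
      Continuous F ∧
      (∀ η : C(Set.Icc (0 : ℝ) T × ℝ, ℝ),
        (∀ p : Set.Icc (0 : ℝ) T × ℝ,
          (F η) p =
            (1 / 2) * (∫ s in (0 : ℝ)..(p.1 : ℝ),
              ∫ y in ((p.2 : ℝ) - (p.1 : ℝ) + s)..((p.2 : ℝ) + (p.1 : ℝ) - s),
                b ((F η) (Set.projIcc 0 T hT.le s, y))) + η p) ∧
        (∀ z : C(Set.Icc (0 : ℝ) T × ℝ, ℝ),
          (∀ p : Set.Icc (0 : ℝ) T × ℝ,
            z p = (1 / 2) * (∫ s in (0 : ℝ)..(p.1 : ℝ),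
              ∫ y in ((p.2 : ℝ) - (p.1 : ℝ) + s)..((p.2 : ℝ) + (p.1 : ℝ) - s),
                b (z (Set.projIcc 0 T hT.le s, y))) + η p) → z = F η)) := by
  have hb : LipschitzWith (Real.toNNReal L) b :=
    LipschitzWith.of_dist_le' fun x y => by simpa only [Real.dist_eq] using hbLip x y
  choose F hF using exists_eq_picard hT.le hb
  have hsol : ∀ η R, EqOn (F η) (picard hT.le b η (F η)) (dependenceDomain T R) :=
    fun η _ q _ => congrFun (hF η) q
  refine ⟨F, continuous_of_forall_isCompact_abs_sub_le fun S hS => ?_,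
    fun η => ⟨fun p => congrFun (hF η) p, fun z hz => ContinuousMap.ext fun p => ?_⟩⟩
  · obtain ⟨R, hSR⟩ := exists_subset_dependenceDomain hS
    exact ⟨_, isCompact_dependenceDomain T R, _, fun η η' δ hδ hη p hp =>
      abs_sub_le_of_eqOn_picard hT.le hb (hsol η R) (hsol η' R) hδ.le hη p (hSR hp)⟩
  · exact eqOn_of_eqOn_picard hT.le hb (R := |p.2|) (fun q _ => hz q) (hsol η _)
      (mem_dependenceDomain_abs p)
end

section
/- Existence, uniqueness, and continuity of the solution operator for the deterministic heat integral equation with bounded Lipschitz drift: For every η ∈ C([0,T]×ℝ) and every bounded Lipschitz b: ℝ → ℝ, the equation z(t,x) = ∫₀^t ∫_ℝ (2π(t−s))^{−1/2} e^{−(x−y)²/(2(t−s))} b(z(s,y)) dy ds + η(t,x) has a unique solution z ∈ C([0,T]×ℝ), and the map F(η) = z is continuous from C([0,T]×ℝ) to itself in the topology of uniform convergence on compact sets. -/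
/-!
Substituting `y = x + √(t - s) w` turns the heat kernel into the standard Gaussian `γ`, so the
equation reads `z = duhamel z + η` with
`duhamel z (t, x) = ∫₀ᵗ ∫ b (z (s, x + √(t - s) w)) dγ(w) ds`.
Since `|duhamel z| ≤ ‖b‖ T`, the unknown `u = z - η` is a fixed point of
`picard η u = duhamel (u + η)` on bounded continuous functions, and the Lipschitz bound on `b`
gives the Volterra estimate `|picard ηⁿ u - picard ηⁿ v| (t) ≤ (L t)ⁿ / n! ‖u - v‖`, so some
iterate of `picard η` is a contraction.
`duhamel` is continuous for locally uniform convergence because `γ` is tight: over a compact set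
of `(s, t, x)` and a compact set of `w` the sampled points stay in a compact set, and the
remaining Gaussian mass is small. The Volterra estimate also makes the Picard iterates
`η ↦ picard ηⁿ 0` converge uniformly in `η`, so the solution map is continuous.
-/

open MeasureTheory Real Set
open Filter Topology NNReal ProbabilityTheory BoundedContinuousFunction

namespace ContinuousMap

variable {X P : Type*} [TopologicalSpace X] [TopologicalSpace P]

lemma eventually_forall_dist_lt (f₀ : C(X, ℝ)) {K : Set X} (hK : IsCompact K) {ε : ℝ}
    (hε : 0 < ε) : ∀ᶠ f in 𝓝 f₀, ∀ x ∈ K, dist (f₀ x) (f x) < ε :=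
  Metric.tendstoUniformlyOn_iff.1
    (tendsto_iff_forall_isCompact_tendstoUniformlyOn.1 tendsto_id K hK) ε hε

lemma continuous_of_forall_eventually_dist_lt {Y : Type*} [TopologicalSpace Y]
    {F : Y → C(X, ℝ)}
    (h : ∀ y₀ (K : Set X), IsCompact K → ∀ ε > 0, ∀ᶠ y in 𝓝 y₀, ∀ x ∈ K,
      dist (F y₀ x) (F y x) < ε) :
    Continuous F :=
  continuous_iff_continuousAt.2 fun y₀ =>
    tendsto_iff_forall_isCompact_tendstoUniformlyOn.2 fun K hK =>
      Metric.tendstoUniformlyOn_iff.2 (h y₀ K hK)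

noncomputable def integralUpTo (τ : C(P, ℝ)) (g : C(ℝ × P, ℝ)) : C(P, ℝ) :=
  ⟨fun p => ∫ s in (0 : ℝ)..τ p, g (s, p),
    intervalIntegral.continuous_parametric_intervalIntegral_of_continuous
      (f := fun p s => g (s, p)) (by fun_prop) τ.continuous⟩

lemma integralUpTo_apply (τ : C(P, ℝ)) (g : C(ℝ × P, ℝ)) (p : P) :
    integralUpTo τ g p = ∫ s in (0 : ℝ)..τ p, g (s, p) := rfl

lemma continuous_integralUpTo (τ : C(P, ℝ)) : Continuous (integralUpTo τ) := by
  refine continuous_of_forall_eventually_dist_lt fun g₀ K hK ε hε => ?_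
  obtain ⟨M, hM0, hM⟩ := (hK.image τ.continuous).isBounded.exists_pos_norm_le
  filter_upwards [eventually_forall_dist_lt g₀ ((isCompact_Icc (a := -M) (b := M)).prod hK)
    (by positivity : 0 < ε / (2 * M))] with g hg p hp
  have hτp : |τ p| ≤ M := hM _ (mem_image_of_mem _ hp)
  have hIcc : uIoc 0 (τ p) ⊆ Icc (-M) M :=
    uIoc_subset_uIcc.trans (uIcc_subset_Icc ⟨by linarith, hM0.le⟩ (abs_le.1 hτp))
  rw [integralUpTo_apply, integralUpTo_apply, dist_eq_norm, ← intervalIntegral.integral_sub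
    ((by fun_prop : Continuous fun s => g₀ (s, p)).intervalIntegrable _ _)
    ((by fun_prop : Continuous fun s => g (s, p)).intervalIntegrable _ _)]
  calc ‖∫ s in (0 : ℝ)..τ p, g₀ (s, p) - g (s, p)‖
      ≤ ε / (2 * M) * |τ p - 0| :=
        intervalIntegral.norm_integral_le_of_norm_le_const fun s hs =>
          (hg (s, p) ⟨hIcc hs, hp⟩).le
    _ ≤ ε / (2 * M) * M := by rw [sub_zero]; gcongr
    _ < ε := by
        rw [div_mul_eq_mul_div, div_lt_iff₀ (by positivity)]
        nlinarith

section AverageComp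

variable {Q W : Type*} [TopologicalSpace Q] [TopologicalSpace W] [MeasurableSpace W]
  [OpensMeasurableSpace W] (μ : Measure W) [IsProbabilityMeasure μ]

variable {μ} in
lemma integrable_comp_apply (b : ℝ →ᵇ ℝ) (φ : C(Q × W, X)) (z : C(X, ℝ)) (q : Q) :
    Integrable (fun w => b (z (φ (q, w)))) μ :=
  .of_bound (show Continuous fun w => b (z (φ (q, w))) by fun_prop).aestronglyMeasurable ‖b‖
    (ae_of_all _ fun _ => b.norm_coe_le_norm _)

variable [FirstCountableTopology Q]

noncomputable def averageComp (b : ℝ →ᵇ ℝ) (φ : C(Q × W, X)) (z : C(X, ℝ)) : C(Q, ℝ) :=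
  ⟨fun q => ∫ w, b (z (φ (q, w))) ∂μ,
    continuous_of_dominated
      (fun q => (show Continuous fun w => b (z (φ (q, w))) by fun_prop).aestronglyMeasurable)
      (fun _ => ae_of_all _ fun _ => b.norm_coe_le_norm _) (integrable_const ‖b‖)
      (ae_of_all _ fun _ => by fun_prop)⟩

variable {μ}

lemma averageComp_apply (b : ℝ →ᵇ ℝ) (φ : C(Q × W, X)) (z : C(X, ℝ)) (q : Q) :
    averageComp μ b φ z q = ∫ w, b (z (φ (q, w))) ∂μ := rfl

lemma norm_averageComp_apply_le (b : ℝ →ᵇ ℝ) (φ : C(Q × W, X)) (z : C(X, ℝ)) (q : Q) :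
    ‖averageComp μ b φ z q‖ ≤ ‖b‖ := by
  simpa [averageComp_apply] using norm_integral_le_of_norm_le_const (μ := μ) (ae_of_all _ fun w =>
    b.norm_coe_le_norm (z (φ (q, w))))

lemma dist_averageComp_apply_le {b : ℝ →ᵇ ℝ} {K : ℝ≥0} (hb : LipschitzWith K b)
    (φ : C(Q × W, X)) {z z' : C(X, ℝ)} {q : Q} {C : Set W} (hC : MeasurableSet C) {c : ℝ}
    (hc : 0 ≤ c) (h : ∀ w ∈ C, dist (z (φ (q, w))) (z' (φ (q, w))) ≤ c) :
    dist (averageComp μ b φ z q) (averageComp μ b φ z' q) ≤ K * c + 2 * ‖b‖ * μ.real Cᶜ := by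
  have hbound : ∀ w, ‖b (z (φ (q, w))) - b (z' (φ (q, w)))‖
      ≤ K * c + Cᶜ.indicator (fun _ => 2 * ‖b‖) w := by
    intro w
    rw [← dist_eq_norm]
    by_cases hw : w ∈ C
    · rw [indicator_of_notMem (notMem_compl_iff.2 hw), add_zero]
      exact (hb.dist_le_mul _ _).trans (mul_le_mul_of_nonneg_left (h w hw) K.coe_nonneg)
    · rw [indicator_of_mem hw]
      refine (b.dist_le_two_norm _ _).trans (le_add_of_nonneg_left ?_)
      exact mul_nonneg K.coe_nonneg hc
  rw [dist_eq_norm, averageComp_apply, averageComp_apply,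
    ← integral_sub (integrable_comp_apply b φ z q) (integrable_comp_apply b φ z' q)]
  calc ‖∫ w, b (z (φ (q, w))) - b (z' (φ (q, w))) ∂μ‖
      ≤ ∫ w, K * c + Cᶜ.indicator (fun _ => 2 * ‖b‖) w ∂μ :=
        norm_integral_le_of_norm_le ((integrable_const _).add
          ((integrable_const _).indicator hC.compl)) (ae_of_all _ hbound)
    _ = K * c + 2 * ‖b‖ * μ.real Cᶜ := by
        rw [integral_add (integrable_const _) ((integrable_const _).indicator hC.compl),
          integral_indicator_const _ hC.compl]
        simp [mul_comm]

lemma dist_averageComp_apply_le_of_forall {b : ℝ →ᵇ ℝ} {K : ℝ≥0} (hb : LipschitzWith K b)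
    (φ : C(Q × W, X)) {z z' : C(X, ℝ)} {q : Q} {c : ℝ}
    (h : ∀ w, dist (z (φ (q, w))) (z' (φ (q, w))) ≤ c) :
    dist (averageComp μ b φ z q) (averageComp μ b φ z' q) ≤ K * c := by
  obtain ⟨w⟩ := nonempty_of_isProbabilityMeasure μ
  simpa using dist_averageComp_apply_le (μ := μ) hb φ MeasurableSet.univ
    (dist_nonneg.trans (h w)) fun w _ => h w

lemma continuous_averageComp [T2Space W] (hμ : IsTightMeasureSet {μ}) {b : ℝ →ᵇ ℝ}
    {K : ℝ≥0} (hb : LipschitzWith K b) (φ : C(Q × W, X)) :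
    Continuous (averageComp μ b φ) := by
  refine continuous_of_forall_eventually_dist_lt fun z₀ S hS ε hε => ?_
  set r := ε / (4 * (‖b‖ + 1))
  obtain ⟨C, hC, hCμ⟩ := isTightMeasureSet_iff_exists_isCompact_measure_compl_le.1 hμ
    (ENNReal.ofReal r) (by positivity)
  have hCμ' : μ.real Cᶜ ≤ r := ENNReal.toReal_le_of_le_ofReal (by positivity) (hCμ μ rfl)
  set δ := ε / (2 * (K + 1))
  filter_upwards [eventually_forall_dist_lt z₀ ((hS.prod hC).image φ.continuous)
    (by positivity : 0 < δ)] with z hz q hq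
  calc dist (averageComp μ b φ z₀ q) (averageComp μ b φ z q)
      ≤ K * δ + 2 * ‖b‖ * μ.real Cᶜ :=
        dist_averageComp_apply_le hb φ hC.measurableSet (by positivity) fun w hw =>
          (hz _ (mem_image_of_mem _ ⟨hq, hw⟩)).le
    _ < ε / 2 + ε / 2 := by
        gcongr ?_ + ?_
        · rw [mul_div_assoc', div_lt_div_iff₀ (by positivity) two_pos]
          nlinarith [K.coe_nonneg]
        · calc 2 * ‖b‖ * μ.real Cᶜ ≤ 2 * ‖b‖ * r := by gcongr
            _ < ε / 2 := by
              rw [mul_div_assoc', div_lt_div_iff₀ (by positivity) two_pos]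
              nlinarith [norm_nonneg b]
    _ = ε := add_halves ε

end AverageComp

end ContinuousMap

section IterateContraction

open Nat

variable {α : Type*} [MetricSpace α] {f : α → α} {C : ℝ}

lemma exists_contractingWith_iterate_of_dist_iterate_le
    (hf : ∀ n x y, dist (f^[n] x) (f^[n] y) ≤ C ^ n / n ! * dist x y) :
    ∃ n, ∃ K, ContractingWith K f^[n] := by
  obtain ⟨n, hn⟩ := ((FloorSemiring.tendsto_pow_div_factorial_atTop C).eventually_lt_const
    one_pos).exists
  refine ⟨n, (C ^ n / n !).toNNReal, ?_, LipschitzWith.of_dist_le' (hf n)⟩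
  rwa [← NNReal.coe_lt_coe, Real.coe_toNNReal', NNReal.coe_one, max_lt_iff, and_iff_left one_pos]

lemma existsUnique_isFixedPt_of_dist_iterate_le [Nonempty α] [CompleteSpace α]
    (hf : ∀ n x y, dist (f^[n] x) (f^[n] y) ≤ C ^ n / n ! * dist x y) :
    ∃! x, Function.IsFixedPt f x := by
  obtain ⟨n, K, hK⟩ := exists_contractingWith_iterate_of_dist_iterate_le hf
  exact ⟨_, hK.isFixedPt_fixedPoint_iterate, fun y hy => hK.fixedPoint_unique' (hy.iterate n)
    (hK.isFixedPt_fixedPoint_iterate.iterate n)⟩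

lemma tendstoUniformly_iterate_of_dist_iterate_le {P : Type*} {f : P → α → α} (hC : 0 ≤ C)
    (hf : ∀ p n x y, dist ((f p)^[n] x) ((f p)^[n] y) ≤ C ^ n / n ! * dist x y)
    {x : P → α} (hx : ∀ p, Function.IsFixedPt (f p) (x p)) (x₀ : α) {M : ℝ}
    (hM : ∀ p, dist (x p) x₀ ≤ M) :
    TendstoUniformly (fun n p => (f p)^[n] x₀) x atTop := by
  rw [Metric.tendstoUniformly_iff]
  intro ε hε
  have hlim : Tendsto (fun n : ℕ => C ^ n / n ! * M) atTop (𝓝 0) := by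
    simpa using (FloorSemiring.tendsto_pow_div_factorial_atTop C).mul_const M
  filter_upwards [hlim.eventually_lt_const hε] with n hn p
  calc dist (x p) ((f p)^[n] x₀) = dist ((f p)^[n] (x p)) ((f p)^[n] x₀) := by
        rw [((hx p).iterate n).eq]
    _ ≤ C ^ n / n ! * dist (x p) x₀ := hf p n _ _
    _ ≤ C ^ n / n ! * M := by gcongr; exact hM p
    _ < ε := hn

end IterateContraction

lemma BoundedContinuousFunction.uniformContinuous_toContinuousMap {X : Type*}
    [TopologicalSpace X] :
    UniformContinuous (toContinuousMap : (X →ᵇ ℝ) → C(X, ℝ)) := by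
  rw [ContinuousMap.isUniformEmbedding_toUniformOnFunIsCompact.isUniformInducing
    |>.uniformContinuous_iff]
  refine (UniformOnFun.uniformContinuous_ofUniformFun _ _).comp ?_
  refine (Metric.uniformity_basis_dist.uniformContinuous_iff
    (UniformFun.hasBasis_uniformity_of_basis X ℝ Metric.uniformity_basis_dist)).2 fun ε hε =>
      ⟨ε, hε, fun _ _ hfg x => (dist_coe_le_dist x).trans_lt hfg⟩

lemma gaussianReal_map_const_add_mul {τ : ℝ} (hτ : 0 ≤ τ) (x : ℝ) :
    (gaussianReal 0 1).map (fun w => x + √τ * w) = gaussianReal x τ.toNNReal := by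
  rw [show (fun w => x + √τ * w) = (x + ·) ∘ (√τ * ·) from rfl,
    ← Measure.map_map (measurable_const_add x) (measurable_const_mul _),
    gaussianReal_map_const_mul, gaussianReal_map_const_add]
  congr 1
  · simp
  · ext; simp [sq_sqrt hτ, hτ]

lemma integral_heatKernel_mul {τ : ℝ} (hτ : 0 < τ) (x : ℝ) (g : ℝ → ℝ) :
    ∫ y, exp (-(x - y) ^ 2 / (2 * τ)) / √(2 * π * τ) * g y
      = ∫ w, g (x + √τ * w) ∂gaussianReal 0 1 := by
  have hemb : MeasurableEmbedding fun w => x + √τ * w :=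
    (measurableEmbedding_addLeft x).comp (measurableEmbedding_mulLeft₀ (sqrt_pos.2 hτ).ne')
  rw [← hemb.integral_map, gaussianReal_map_const_add_mul hτ.le,
    integral_gaussianReal_eq_integral_smul (by simpa using hτ)]
  congr 1 with y
  rw [gaussianPDFReal, Real.coe_toNNReal _ hτ.le, smul_eq_mul, ← neg_sub y x, neg_sq,
    div_eq_inv_mul]

namespace HeatEquation

open ContinuousMap

variable {T : ℝ} (hT : 0 ≤ T)

local notation "𝕏" => Icc (0 : ℝ) T × ℝ
local notation "γ" => gaussianReal 0 1

/-- `((s, (t, x)), w) ↦ (s, x + √(t - s) w)`, the point at which the substituted heat kernel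
samples `z`. -/
noncomputable def heatPoint : C((ℝ × 𝕏) × ℝ, 𝕏) :=
  ⟨fun q => (projIcc 0 T hT q.1.1, q.1.2.2 + √(q.1.2.1 - q.1.1) * q.2),
    (continuous_projIcc.comp (by fun_prop)).prodMk (by fun_prop)⟩

noncomputable def duhamel (b : ℝ →ᵇ ℝ) (z : C(𝕏, ℝ)) : C(𝕏, ℝ) :=
  integralUpTo ⟨fun p => p.1, by fun_prop⟩ (averageComp γ b (heatPoint hT) z)

lemma duhamel_apply (b : ℝ →ᵇ ℝ) (z : C(𝕏, ℝ)) (p : 𝕏) :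
    duhamel hT b z p = ∫ s in (0 : ℝ)..p.1, averageComp γ b (heatPoint hT) z (s, p) :=
  rfl

lemma integral_heatKernel_eq_duhamel (b : ℝ →ᵇ ℝ) (z : C(𝕏, ℝ)) (p : 𝕏) :
    ∫ s in (0 : ℝ)..(p.1 : ℝ), ∫ y : ℝ,
      exp (-((p.2 : ℝ) - y) ^ 2 / (2 * ((p.1 : ℝ) - s))) / √(2 * π * ((p.1 : ℝ) - s)) *
        b (z (projIcc 0 T hT s, y)) = duhamel hT b z p := by
  rw [duhamel_apply, intervalIntegral.integral_of_le p.1.2.1,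
    intervalIntegral.integral_of_le p.1.2.1, integral_Ioc_eq_integral_Ioo,
    integral_Ioc_eq_integral_Ioo]
  refine setIntegral_congr_fun measurableSet_Ioo fun s hs => ?_
  exact integral_heatKernel_mul (sub_pos.2 hs.2) _ _

lemma norm_duhamel_apply_le (b : ℝ →ᵇ ℝ) (z : C(𝕏, ℝ)) (p : 𝕏) :
    ‖duhamel hT b z p‖ ≤ ‖b‖ * T := by
  calc ‖duhamel hT b z p‖ ≤ ‖b‖ * |(p.1 : ℝ) - 0| :=
        intervalIntegral.norm_integral_le_of_norm_le_const fun s _ =>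
          norm_averageComp_apply_le b (heatPoint hT) z (s, p)
    _ ≤ ‖b‖ * T := by
        rw [sub_zero, abs_of_nonneg p.1.2.1]
        exact mul_le_mul_of_nonneg_left p.1.2.2 (norm_nonneg b)

lemma continuous_duhamel {b : ℝ →ᵇ ℝ} {K : ℝ≥0} (hb : LipschitzWith K b) :
    Continuous (duhamel hT b) :=
  (continuous_integralUpTo _).comp (continuous_averageComp isTightMeasureSet_singleton hb _)

lemma dist_duhamel_apply_le {b : ℝ →ᵇ ℝ} {K : ℝ≥0} (hb : LipschitzWith K b)
    {z z' : C(𝕏, ℝ)} {M : ℝ} {n : ℕ}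
    (h : ∀ p : 𝕏, dist (z p) (z' p) ≤ M * (p.1 : ℝ) ^ n) (p : 𝕏) :
    dist (duhamel hT b z p) (duhamel hT b z' p) ≤ K * M * (p.1 : ℝ) ^ (n + 1) / (n + 1) := by
  have hpoint : ∀ s ∈ Ioc 0 (p.1 : ℝ),
      dist (averageComp γ b (heatPoint hT) z (s, p))
        (averageComp γ b (heatPoint hT) z' (s, p)) ≤ K * M * s ^ n := by
    intro s hs
    have hproj : ((projIcc 0 T hT s : Icc (0 : ℝ) T) : ℝ) = s :=
      congrArg Subtype.val (projIcc_of_mem hT ⟨hs.1.le, hs.2.trans p.1.2.2⟩)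
    rw [mul_assoc]
    exact dist_averageComp_apply_le_of_forall hb _ fun w => (h _).trans_eq (by
      rw [heatPoint, ContinuousMap.coe_mk, hproj])
  have hint (y : C(𝕏, ℝ)) :
      IntervalIntegrable (fun s => averageComp γ b (heatPoint hT) y (s, p)) volume 0 p.1 :=
    Continuous.intervalIntegrable (by fun_prop) _ _
  rw [dist_eq_norm, duhamel_apply, duhamel_apply,
    ← intervalIntegral.integral_sub (hint z) (hint z')]
  calc _ ≤ ∫ s in (0 : ℝ)..p.1, K * M * s ^ n :=
        intervalIntegral.norm_integral_le_of_norm_le p.1.2.1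
          (ae_of_all _ fun s hs => (dist_eq_norm _ _).symm.trans_le (hpoint s hs))
          ((by fun_prop : Continuous fun s : ℝ => K * M * s ^ n).intervalIntegrable _ _)
    _ = K * M * (p.1 : ℝ) ^ (n + 1) / (n + 1) := by
        rw [intervalIntegral.integral_const_mul, integral_pow]
        ring

noncomputable def picard (b : ℝ →ᵇ ℝ) (η : C(𝕏, ℝ)) (u : 𝕏 →ᵇ ℝ) : 𝕏 →ᵇ ℝ :=
  .ofNormedAddCommGroup (duhamel hT b (u.toContinuousMap + η)) (ContinuousMap.continuous _)
    (‖b‖ * T) (norm_duhamel_apply_le hT b _)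

lemma toContinuousMap_picard (b : ℝ →ᵇ ℝ) (η : C(𝕏, ℝ)) (u : 𝕏 →ᵇ ℝ) :
    (picard hT b η u).toContinuousMap = duhamel hT b (u.toContinuousMap + η) := rfl

lemma norm_picard_le (b : ℝ →ᵇ ℝ) (η : C(𝕏, ℝ)) (u : 𝕏 →ᵇ ℝ) :
    ‖picard hT b η u‖ ≤ ‖b‖ * T :=
  (BoundedContinuousFunction.norm_le (mul_nonneg (norm_nonneg b) hT)).2
    (norm_duhamel_apply_le hT b _)

section Lipschitz

open Nat

variable {b : ℝ →ᵇ ℝ} {K : ℝ≥0} (hb : LipschitzWith K b)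
include hb

lemma dist_picard_iterate_apply_le (η : C(𝕏, ℝ)) (n : ℕ) (u v : 𝕏 →ᵇ ℝ) (p : 𝕏) :
    dist ((picard hT b η)^[n] u p) ((picard hT b η)^[n] v p)
      ≤ (K * (p.1 : ℝ)) ^ n / n ! * dist u v := by
  induction n generalizing p with
  | zero => simpa using dist_coe_le_dist p
  | succ n ih =>
    rw [Function.iterate_succ_apply', Function.iterate_succ_apply']
    refine (dist_duhamel_apply_le hT hb (M := K ^ n / n ! * dist u v) (n := n)
      (fun q => ?_) p).trans_eq ?_
    · simpa [mul_pow, div_mul_eq_mul_div, mul_right_comm] using ih q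
    · rw [factorial_succ]
      push_cast
      field_simp
      ring

lemma dist_picard_iterate_le (η : C(𝕏, ℝ)) (n : ℕ) (u v : 𝕏 →ᵇ ℝ) :
    dist ((picard hT b η)^[n] u) ((picard hT b η)^[n] v) ≤ (K * T) ^ n / n ! * dist u v :=
  (BoundedContinuousFunction.dist_le (by positivity)).2 fun p =>
    (dist_picard_iterate_apply_le hT hb η n u v p).trans (by
      gcongr
      · exact mul_nonneg K.coe_nonneg p.1.2.1
      · exact p.1.2.2)

lemma existsUnique_isFixedPt_picard (η : C(𝕏, ℝ)) :
    ∃! u, Function.IsFixedPt (picard hT b η) u :=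
  existsUnique_isFixedPt_of_dist_iterate_le (dist_picard_iterate_le hT hb η)

lemma continuous_toContinuousMap_picard_iterate (n : ℕ) :
    Continuous fun η => ((picard hT b η)^[n] 0).toContinuousMap := by
  induction n with
  | zero => exact continuous_const
  | succ n ih =>
    simp only [Function.iterate_succ_apply', toContinuousMap_picard]
    exact (continuous_duhamel hT hb).comp (ih.add continuous_id)

lemma continuous_toContinuousMap_of_isFixedPt_picard {u : C(𝕏, ℝ) → 𝕏 →ᵇ ℝ}
    (hu : ∀ η, Function.IsFixedPt (picard hT b η) (u η)) :
    Continuous fun η => (u η).toContinuousMap :=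
  (uniformContinuous_toContinuousMap.comp_tendstoUniformly
    (tendstoUniformly_iterate_of_dist_iterate_le (by positivity)
      (fun η => dist_picard_iterate_le hT hb η) hu 0 fun η => by
        simpa [(hu η).eq] using norm_picard_le hT b η (u η))).continuous
    (Frequently.of_forall (continuous_toContinuousMap_picard_iterate hT hb))

end Lipschitz

lemma exists_isFixedPt_picard_of_eq {b : ℝ →ᵇ ℝ} {η z : C(𝕏, ℝ)}
    (hz : ∀ p, z p = duhamel hT b z p + η p) :
    ∃ v, Function.IsFixedPt (picard hT b η) v ∧ v.toContinuousMap + η = z := by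
  set v : 𝕏 →ᵇ ℝ := .ofNormedAddCommGroup (duhamel hT b z)
    (ContinuousMap.continuous _) (‖b‖ * T) (norm_duhamel_apply_le hT b z)
  have hv : v.toContinuousMap + η = z := by ext p; exact (hz p).symm
  refine ⟨v, ?_, hv⟩
  ext p
  change duhamel hT b (v.toContinuousMap + η) p = duhamel hT b z p
  rw [hv]

end HeatEquation

open HeatEquation in
theorem heat_solution_operator (T : ℝ) (hT : 0 < T) (b : ℝ → ℝ) (L B : ℝ)
    (hbLip : ∀ x y, |b x - b y| ≤ L * |x - y|) (hbB : ∀ x, |b x| ≤ B) :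
    ∃ F : C(Set.Icc (0 : ℝ) T × ℝ, ℝ) → C(Set.Icc (0 : ℝ) T × ℝ, ℝ),
      Continuous F ∧
      (∀ η : C(Set.Icc (0 : ℝ) T × ℝ, ℝ),
        (∀ p : Set.Icc (0 : ℝ) T × ℝ,
          (F η) p =
            (∫ s in (0 : ℝ)..(p.1 : ℝ), ∫ y : ℝ,
              Real.exp (-((p.2 : ℝ) - y) ^ 2 / (2 * ((p.1 : ℝ) - s))) /
                  Real.sqrt (2 * π * ((p.1 : ℝ) - s)) *
                b ((F η) (Set.projIcc 0 T hT.le s, y))) + η p) ∧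
        (∀ z : C(Set.Icc (0 : ℝ) T × ℝ, ℝ),
          (∀ p : Set.Icc (0 : ℝ) T × ℝ,
            z p = (∫ s in (0 : ℝ)..(p.1 : ℝ), ∫ y : ℝ,
              Real.exp (-((p.2 : ℝ) - y) ^ 2 / (2 * ((p.1 : ℝ) - s))) /
                  Real.sqrt (2 * π * ((p.1 : ℝ) - s)) *
                b (z (Set.projIcc 0 T hT.le s, y))) + η p) → z = F η)) := by
  obtain ⟨b, rfl⟩ : ∃ b' : ℝ →ᵇ ℝ, ⇑b' = b :=
    ⟨.ofNormedAddCommGroup b (LipschitzWith.of_dist_le' hbLip).continuous B hbB, rfl⟩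
  have hb : LipschitzWith L.toNNReal b := .of_dist_le' hbLip
  choose u hu huniq using existsUnique_isFixedPt_picard hT.le hb
  refine ⟨fun η => (u η).toContinuousMap + η,
    (continuous_toContinuousMap_of_isFixedPt_picard hT.le hb hu).add continuous_id,
    fun η => ⟨fun p => ?_, fun z hz => ?_⟩⟩
  · rw [integral_heatKernel_eq_duhamel, ← toContinuousMap_picard, (hu η).eq]
    rfl
  · obtain ⟨v, hv, rfl⟩ := exists_isFixedPt_picard_of_eq hT.le fun p =>
      (hz p).trans (by rw [integral_heatKernel_eq_duhamel])
    rw [huniq η v hv]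
end
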